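/- For p ∈ (0, 1/2), the function φ_p : [0,1] → [0,1] defined by φ_p(x) = h₂( h₂⁻¹(x) ∗ p ) is convex and non-decreasing, where h₂⁻¹ maps [0,1] to [0,1/2]. -/

import Mathlib

/-- Binary convolution `a ∗ b = a(1-b) + b(1-a)`. -/
noncomputable def bconv (a b : ℝ) : ℝ := a * (1 - b) + b * (1 - a)

/-- Binary entropy (base 2), with the convention `0 · log 0 = 0`. -/
noncomputable def h2 (x : ℝ) : ℝ := -x * Real.logb 2 x - (1 - x) * Real.logb 2 (1 - x)

/-- Inverse of binary entropy, mapping `[0,1]` to `[0,1/2]`. -/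
noncomputable def h2inv (y : ℝ) : ℝ :=
  sSup {r : ℝ | r ∈ Set.Icc (0:ℝ) (1/2) ∧ h2 r ≤ y}

/-!
Write `t = h₂⁻¹ x` and `L t = log (1 - t) - log t`, so that `h₂' = L / log 2`. By the chain
rule and the inverse function rule, `φ_p'(x) = (1 - 2p) L (t ∗ p) / L t`; as `h₂⁻¹` is
increasing, convexity of `φ_p` reduces to this ratio being increasing in `t ∈ (0, 1/2)`.
Differentiating, this is the inequality `(1 - 2p) F t ≤ F (t ∗ p)` for `F t = t (1 - t) L t`.
It holds because `F` is concave on `(0, 1/2]` (`F'' = -2 L t - (1 - 2t) / (t (1 - t)) ≤ 0`),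
`F (1/2) = 0`, and `t ∗ p = (1 - 2p) t + 2p · 1/2`. Monotonicity of `φ_p` is that of a
composition of monotone maps.
-/

open Real Set

lemma h2_eq_binEntropy_div : h2 = fun x => binEntropy x / log 2 := by
  ext x
  simp only [h2, binEntropy, logb, log_inv]
  ring

lemma continuous_h2 : Continuous h2 := by
  rw [h2_eq_binEntropy_div]
  exact binEntropy_continuous.div_const (log 2)

lemma h2_zero : h2 0 = 0 := by simp [h2_eq_binEntropy_div]

lemma h2_half : h2 (1/2) = 1 := by
  simp only [h2_eq_binEntropy_div, one_div, binEntropy_two_inv]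
  exact div_self (log_pos one_lt_two).ne'

lemma strictMonoOn_h2 : StrictMonoOn h2 (Icc 0 (1/2)) := by
  intro a ha b hb hab
  rw [one_div] at ha hb
  simp only [h2_eq_binEntropy_div]
  exact div_lt_div_of_pos_right (binEntropy_strictMonoOn ha hb hab) (log_pos one_lt_two)

noncomputable def binEntropyDeriv (t : ℝ) : ℝ := log (1 - t) - log t

lemma hasDerivAt_h2 {x : ℝ} (h0 : x ≠ 0) (h1 : x ≠ 1) :
    HasDerivAt h2 (binEntropyDeriv x / log 2) x := by
  rw [h2_eq_binEntropy_div]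
  exact (hasDerivAt_binEntropy h0 h1).div_const (log 2)

lemma binEntropyDeriv_pos {t : ℝ} (h0 : 0 < t) (h1 : t < 1/2) : 0 < binEntropyDeriv t :=
  sub_pos.2 (log_lt_log h0 (by linarith))

lemma binEntropyDeriv_half : binEntropyDeriv (1/2) = 0 := by norm_num [binEntropyDeriv]

lemma hasDerivAt_binEntropyDeriv {t : ℝ} (h0 : 0 < t) (h1 : t < 1) :
    HasDerivAt binEntropyDeriv (-(t * (1 - t))⁻¹) t := by
  have h1' : 1 - t ≠ 0 := by linarith
  refine (((hasDerivAt_id t).const_sub 1).log h1' |>.sub (hasDerivAt_log h0.ne')).congr_deriv ?_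
  simp only [id]
  field_simp
  ring

lemma h2inv_h2 {t : ℝ} (ht : t ∈ Icc 0 (1/2)) : h2inv (h2 t) = t :=
  IsGreatest.csSup_eq ⟨⟨ht, le_rfl⟩, fun _ hr => (strictMonoOn_h2.le_iff_le hr.1 ht).1 hr.2⟩

lemma mapsTo_h2 : MapsTo h2 (Icc 0 (1/2)) (Icc 0 1) := fun t ht => by
  have hmono := strictMonoOn_h2.monotoneOn
  exact ⟨h2_zero ▸ hmono ⟨le_rfl, by norm_num⟩ ht ht.1,
    h2_half ▸ hmono ht ⟨by norm_num, le_rfl⟩ ht.2⟩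

lemma surjOn_h2 : SurjOn h2 (Icc 0 (1/2)) (Icc 0 1) := by
  have := intermediate_value_Icc (by norm_num : (0:ℝ) ≤ 1/2) continuous_h2.continuousOn
  rwa [h2_zero, h2_half] at this

lemma h2inv_mem_Icc {y : ℝ} (hy : y ∈ Icc 0 1) : h2inv y ∈ Icc 0 (1/2) := by
  obtain ⟨t, ht, rfl⟩ := surjOn_h2 hy
  rwa [h2inv_h2 ht]

lemma h2_h2inv {y : ℝ} (hy : y ∈ Icc 0 1) : h2 (h2inv y) = y := by
  obtain ⟨t, ht, rfl⟩ := surjOn_h2 hy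
  rw [h2inv_h2 ht]

lemma h2inv_mem_Ioo {y : ℝ} (hy : y ∈ Ioo 0 1) : h2inv y ∈ Ioo 0 (1/2) := by
  have hmem := h2inv_mem_Icc (Ioo_subset_Icc_self hy)
  have hh2 := h2_h2inv (Ioo_subset_Icc_self hy)
  refine ⟨hmem.1.lt_of_ne fun h => ?_, hmem.2.lt_of_ne fun h => ?_⟩
  · rw [← h, h2_zero] at hh2
    exact hy.1.ne hh2
  · rw [h, h2_half] at hh2
    exact hy.2.ne' hh2

lemma monotoneOn_h2inv : MonotoneOn h2inv (Icc 0 1) := fun a ha b hb hab => by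
  rwa [← strictMonoOn_h2.le_iff_le (h2inv_mem_Icc ha) (h2inv_mem_Icc hb), h2_h2inv ha,
    h2_h2inv hb]

lemma continuousOn_h2inv : ContinuousOn h2inv (Icc 0 1) := by
  let g : Icc (0:ℝ) 1 → Icc (0:ℝ) (1/2) := fun y => ⟨h2inv y, h2inv_mem_Icc y.2⟩
  have hg_mono : Monotone g := fun a b hab => monotoneOn_h2inv a.2 b.2 hab
  have hg_surj : Function.Surjective g := fun t =>
    ⟨⟨h2 t, mapsTo_h2 t.2⟩, Subtype.ext (h2inv_h2 t.2)⟩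
  rw [continuousOn_iff_continuous_domRestrict]
  exact continuous_subtype_val.comp (hg_mono.continuous_of_surjective hg_surj)

lemma hasDerivAt_h2inv {y : ℝ} (hy : y ∈ Ioo 0 1) :
    HasDerivAt h2inv (binEntropyDeriv (h2inv y) / log 2)⁻¹ y := by
  obtain ⟨ht0, ht1⟩ := h2inv_mem_Ioo hy
  refine HasDerivAt.of_local_left_inverse
    (continuousOn_h2inv.continuousAt (Icc_mem_nhds hy.1 hy.2))
    (hasDerivAt_h2 ht0.ne' (by linarith))
    (div_pos (binEntropyDeriv_pos ht0 ht1) (log_pos one_lt_two)).ne' ?_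
  filter_upwards [Ioo_mem_nhds hy.1 hy.2] with z hz
  exact h2_h2inv (Ioo_subset_Icc_self hz)

lemma hasDerivAt_mul_binEntropyDeriv {t : ℝ} (h0 : 0 < t) (h1 : t < 1) :
    HasDerivAt (fun s => s * (1 - s) * binEntropyDeriv s)
      ((1 - 2 * t) * binEntropyDeriv t - 1) t := by
  have h1' : 1 - t ≠ 0 := by linarith
  refine (((hasDerivAt_id t).mul ((hasDerivAt_id t).const_sub 1)).mul
    (hasDerivAt_binEntropyDeriv h0 h1)).congr_deriv ?_
  simp only [id, Pi.mul_apply]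
  field_simp
  ring

lemma concaveOn_mul_binEntropyDeriv :
    ConcaveOn ℝ (Ioc 0 (1/2)) (fun t => t * (1 - t) * binEntropyDeriv t) := by
  refine concaveOn_of_hasDerivWithinAt2_nonpos (convex_Ioc 0 (1/2))
    (f' := fun t => (1 - 2 * t) * binEntropyDeriv t - 1)
    (f'' := fun t => -2 * binEntropyDeriv t + (1 - 2 * t) * -(t * (1 - t))⁻¹)
    (fun t ht => (hasDerivAt_mul_binEntropyDeriv ht.1
      (by linarith [ht.2])).continuousAt.continuousWithinAt) ?_ ?_ ?_ <;> rw [interior_Ioc]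
  · exact fun t ht => (hasDerivAt_mul_binEntropyDeriv ht.1 (by linarith [ht.2])).hasDerivWithinAt
  · intro t ht
    have hG := ((hasDerivAt_id t).const_mul 2 |>.const_sub 1).mul
      (hasDerivAt_binEntropyDeriv ht.1 (by linarith [ht.2])) |>.sub_const 1
    refine (hG.congr_deriv ?_).hasDerivWithinAt
    simp only [id]
    ring
  · intro t ⟨ht0, ht1⟩
    have hL := binEntropyDeriv_pos ht0 ht1
    have : 0 ≤ (1 - 2 * t) * (t * (1 - t))⁻¹ :=
      mul_nonneg (by linarith) (inv_nonneg.2 (mul_nonneg ht0.le (by linarith)))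
    linarith

lemma mul_binEntropyDeriv_le_bconv {p t : ℝ} (hp : p ∈ Icc 0 (1/2))
    (ht : t ∈ Ioc 0 (1/2)) :
    (1 - 2 * p) * (t * (1 - t) * binEntropyDeriv t)
      ≤ bconv t p * (1 - bconv t p) * binEntropyDeriv (bconv t p) := by
  have h := concaveOn_mul_binEntropyDeriv.2 ht (right_mem_Ioc.2 (by norm_num : (0:ℝ) < 1/2))
    (by linarith [hp.2] : 0 ≤ 1 - 2 * p) (by linarith [hp.1] : 0 ≤ 2 * p) (by ring)
  have hconv : (1 - 2 * p) • t + (2 * p) • (1/2 : ℝ) = bconv t p := by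
    simp only [smul_eq_mul, bconv]
    ring
  rw [hconv] at h
  simpa only [binEntropyDeriv_half, smul_eq_mul, mul_zero, add_zero] using h

lemma hasDerivAt_bconv_left (p t : ℝ) : HasDerivAt (fun s => bconv s p) (1 - 2 * p) t := by
  refine ((((hasDerivAt_id t).mul_const (1 - p)).add
    ((hasDerivAt_id t).const_sub 1 |>.const_mul p))).congr_deriv ?_
  ring

lemma continuous_bconv_left (p : ℝ) : Continuous (fun t => bconv t p) := by
  unfold bconv
  fun_prop

lemma monotone_bconv_left {p : ℝ} (hp : p ≤ 1/2) : Monotone (fun t => bconv t p) :=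
  fun s t hst => by
    simp only [bconv]
    nlinarith

lemma bconv_mem_Icc {p t : ℝ} (hp : p ∈ Icc 0 (1/2)) (ht : t ∈ Icc 0 (1/2)) :
    bconv t p ∈ Icc 0 (1/2) := by
  obtain ⟨hp0, hp1⟩ := hp
  obtain ⟨ht0, ht1⟩ := ht
  constructor <;> simp only [bconv] <;> nlinarith

lemma bconv_mem_Ioc {p t : ℝ} (hp : p ∈ Icc 0 (1/2)) (ht : t ∈ Ioc 0 (1/2)) :
    bconv t p ∈ Ioc 0 (1/2) := by
  obtain ⟨hp0, hp1⟩ := hp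
  obtain ⟨ht0, ht1⟩ := ht
  constructor <;> simp only [bconv] <;> nlinarith

/-- `φ_p'(h₂ t) = h₂'(t ∗ p) (1 - 2p) / h₂'(t)`, by the chain rule and the inverse function
rule. -/
noncomputable def phiDeriv (p t : ℝ) : ℝ :=
  (1 - 2 * p) * binEntropyDeriv (bconv t p) / binEntropyDeriv t

lemma hasDerivAt_phiDeriv {p t : ℝ} (hp : p ∈ Icc 0 (1/2)) (ht : t ∈ Ioo 0 (1/2)) :
    HasDerivAt (phiDeriv p)
      ((1 - 2 * p) * (binEntropyDeriv (bconv t p) / (t * (1 - t))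
        - (1 - 2 * p) * binEntropyDeriv t / (bconv t p * (1 - bconv t p)))
        / binEntropyDeriv t ^ 2) t := by
  obtain ⟨hg0, hg1⟩ := bconv_mem_Ioc hp (Ioo_subset_Ioc_self ht)
  have hL := (binEntropyDeriv_pos ht.1 ht.2).ne'
  have ht1 : 1 - t ≠ 0 := by linarith [ht.2]
  have hg1' : 1 - bconv t p ≠ 0 := by linarith
  have hnum := ((hasDerivAt_binEntropyDeriv hg0 (by linarith)).comp t
    (hasDerivAt_bconv_left p t)).const_mul (1 - 2 * p)
  refine (hnum.div (hasDerivAt_binEntropyDeriv ht.1 (by linarith [ht.2])) hL).congr_deriv ?_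
  simp only [Function.comp_apply]
  field_simp
  ring

lemma monotoneOn_phiDeriv {p : ℝ} (hp : p ∈ Icc 0 (1/2)) :
    MonotoneOn (phiDeriv p) (Ioo 0 (1/2)) := by
  refine monotoneOn_of_deriv_nonneg (convex_Ioo 0 (1/2))
    (fun t ht => (hasDerivAt_phiDeriv hp ht).continuousAt.continuousWithinAt)
    (fun t ht => ?_) (fun t ht => ?_) <;> rw [interior_Ioo] at ht
  · exact (hasDerivAt_phiDeriv hp ht).differentiableAt.differentiableWithinAt
  rw [(hasDerivAt_phiDeriv hp ht).deriv]
  obtain ⟨hg0, hg1⟩ := bconv_mem_Ioc hp (Ioo_subset_Ioc_self ht)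
  have key := mul_binEntropyDeriv_le_bconv hp (Ioo_subset_Ioc_self ht)
  have hslope : (1 - 2 * p) * binEntropyDeriv t / (bconv t p * (1 - bconv t p))
      ≤ binEntropyDeriv (bconv t p) / (t * (1 - t)) := by
    rw [div_le_div_iff₀ (mul_pos hg0 (by linarith)) (mul_pos ht.1 (by linarith [ht.2]))]
    linarith
  exact div_nonneg (mul_nonneg (by linarith [hp.2]) (sub_nonneg.2 hslope)) (sq_nonneg _)

lemma hasDerivAt_h2_bconv_h2inv {p x : ℝ} (hp : p ∈ Icc 0 (1/2)) (hx : x ∈ Ioo 0 1) :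
    HasDerivAt (fun x => h2 (bconv (h2inv x) p)) (phiDeriv p (h2inv x)) x := by
  obtain ⟨ht0, ht1⟩ := h2inv_mem_Ioo hx
  obtain ⟨hg0, hg1⟩ := bconv_mem_Ioc hp ⟨ht0, ht1.le⟩
  have hL := (binEntropyDeriv_pos ht0 ht1).ne'
  have hlog := (log_pos one_lt_two).ne'
  refine ((hasDerivAt_h2 hg0.ne' (by linarith)).comp x
    ((hasDerivAt_bconv_left p _).comp x (hasDerivAt_h2inv hx))).congr_deriv ?_
  simp only [phiDeriv]
  field_simp

/-- for `p ∈ (0,1/2)`, the function `φ_p(x) = h₂(h₂⁻¹(x) ∗ p)` is convex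
and non-decreasing on `[0,1]`. -/
theorem stmt17 (p : ℝ) (hp : p ∈ Set.Ioo (0:ℝ) (1/2)) :
    ConvexOn ℝ (Set.Icc (0:ℝ) 1) (fun x => h2 (bconv (h2inv x) p)) ∧
      MonotoneOn (fun x => h2 (bconv (h2inv x) p)) (Set.Icc (0:ℝ) 1) := by
  have hp' := Ioo_subset_Icc_self hp
  have hderiv : ∀ x ∈ interior (Icc (0:ℝ) 1),
      HasDerivAt (fun x => h2 (bconv (h2inv x) p)) (phiDeriv p (h2inv x)) x := by
    rw [interior_Icc]
    exact fun x hx => hasDerivAt_h2_bconv_h2inv hp' hx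
  have hderiv_mono : MonotoneOn (fun x => phiDeriv p (h2inv x)) (interior (Icc 0 1)) := by
    rw [interior_Icc]
    exact (monotoneOn_phiDeriv hp').comp (monotoneOn_h2inv.mono Ioo_subset_Icc_self)
      fun x hx => h2inv_mem_Ioo hx
  refine ⟨MonotoneOn.convexOn_of_deriv (convex_Icc 0 1) ?_ ?_ ?_, ?_⟩
  · exact continuous_h2.comp_continuousOn
      ((continuous_bconv_left p).comp_continuousOn continuousOn_h2inv)
  · exact fun x hx => (hderiv x hx).differentiableAt.differentiableWithinAt
  · exact hderiv_mono.congr fun x hx => (hderiv x hx).deriv.symm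
  · exact (strictMonoOn_h2.monotoneOn.comp ((monotone_bconv_left hp'.2).monotoneOn _)
      fun t ht => bconv_mem_Icc hp' ht).comp monotoneOn_h2inv fun x hx => h2inv_mem_Icc hx
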